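/- arXiv:1801.02130 — 2 statements merged into one kernel-verified Lean document; each statement's English description precedes it below -/
import Mathlib

section
/- Let ρ : ℝ² → ℝ be differentiable at x, φ : ℝ² → ℝ have gradient ∇φ differentiable at x, and V : ℝ → ℝ be differentiable at ρ(x). Suppose the steady-state Hughes equation holds at x, i.e., the divergence of the flux F(y) = ρ(y) V(ρ(y))² ∇φ(y) vanishes at x, and suppose additionally Δφ(x) = 0. If V(ρ(x)) ≠ 0 and 2 ρ(x) V'(ρ(x)) + V(ρ(x)) ≠ 0, then ⟪∇ρ(x), ∇φ(x)⟫ = 0; that is, at such points the level curves of the density are perpendicular in gradient to the isopotential curves. -/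
/-!
Write the flux as `f • ∇φ` with `f = ρ V(ρ)²`. The product rule gives
`div (f ∇φ) = f Δφ + ⟪∇f, ∇φ⟫`, and the chain rule gives `∇f = V(ρ) (2 ρ V'(ρ) + V(ρ)) ∇ρ`.
With `Δφ = 0` the steady-state equation reduces to this nonzero coefficient times `⟪∇ρ, ∇φ⟫`.
-/

open RealInnerProductSpace

noncomputable section

/-- The Euclidean plane `ℝ²`. -/
abbrev E2 : Type := EuclideanSpace ℝ (Fin 2)

/-- The divergence of a vector field `F : ℝ² → ℝ²` at a point `x`:
the trace of the Fréchet derivative of `F` at `x`. -/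
def div2 (F : E2 → E2) (x : E2) : ℝ :=
  LinearMap.trace ℝ E2 (fderiv ℝ F x).toLinearMap

section ProductRule

variable {𝕜 E : Type*} [NontriviallyNormedField 𝕜] [NormedAddCommGroup E] [NormedSpace 𝕜 E]
  [FiniteDimensional 𝕜 E]

theorem ContinuousLinearMap.trace_smulRight (ℓ : E →L[𝕜] 𝕜) (w : E) :
    LinearMap.trace 𝕜 E (ℓ.smulRight w).toLinearMap = ℓ w :=
  LinearMap.trace_smulRight ℓ.toLinearMap w

theorem trace_fderiv_smul {f : E → 𝕜} {F : E → E} {x : E}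
    (hf : DifferentiableAt 𝕜 f x) (hF : DifferentiableAt 𝕜 F x) :
    LinearMap.trace 𝕜 E (fderiv 𝕜 (fun y => f y • F y) x).toLinearMap
      = f x * LinearMap.trace 𝕜 E (fderiv 𝕜 F x).toLinearMap + fderiv 𝕜 f x (F x) := by
  rw [fderiv_fun_smul hf hF, ContinuousLinearMap.toLinearMap_add, map_add,
    ContinuousLinearMap.toLinearMap_smul, map_smul, smul_eq_mul,
    ContinuousLinearMap.trace_smulRight]

end ProductRule

theorem div2_smul {f : E2 → ℝ} {F : E2 → E2} {x : E2}
    (hf : DifferentiableAt ℝ f x) (hF : DifferentiableAt ℝ F x) :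
    div2 (fun y => f y • F y) x = f x * div2 F x + ⟪gradient f x, F x⟫ := by
  rw [div2, div2, trace_fderiv_smul hf hF, inner_gradient_left]

theorem hasFDerivAt_mul_comp_sq {E : Type*} [NormedAddCommGroup E] [NormedSpace ℝ E]
    {ρ : E → ℝ} {V : ℝ → ℝ} {x : E} {L : E →L[ℝ] ℝ}
    (hρ : HasFDerivAt ρ L x) (hV : DifferentiableAt ℝ V (ρ x)) :
    HasFDerivAt (fun y => ρ y * V (ρ y) ^ 2)
      ((V (ρ x) * (2 * ρ x * deriv V (ρ x) + V (ρ x))) • L) x := by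
  have hVρ : HasFDerivAt (fun y => V (ρ y)) (deriv V (ρ x) • L) x :=
    hV.hasDerivAt.comp_hasFDerivAt x hρ
  refine (hρ.fun_mul (hVρ.pow 2)).congr_fderiv ?_
  simp only [smul_smul, nsmul_eq_mul]
  module

/-- (Hughes' low free-flow density limit case.) If the steady-state
Hughes equation `div (ρ V(ρ)² ∇φ) = 0` holds at `x`, `Δφ(x) = 0`, `V(ρ(x)) ≠ 0`,
and `2 ρ(x) V'(ρ(x)) + V(ρ(x)) ≠ 0`, then `⟪∇ρ(x), ∇φ(x)⟫ = 0`: density gradients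
are perpendicular to potential gradients. -/
theorem hughes_low_density_limit (ρ φ : E2 → ℝ) (V : ℝ → ℝ) (x : E2)
    (hρ : DifferentiableAt ℝ ρ x)
    (hφ : DifferentiableAt ℝ (gradient φ) x)
    (hV : DifferentiableAt ℝ V (ρ x))
    (hdiv : div2 (fun y => (ρ y * (V (ρ y)) ^ 2) • gradient φ y) x = 0)
    (hlap : div2 (gradient φ) x = 0)
    (hV0 : V (ρ x) ≠ 0)
    (hcoef : 2 * ρ x * deriv V (ρ x) + V (ρ x) ≠ 0) :
    ⟪gradient ρ x, gradient φ x⟫ = 0 := by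
  have hflux := hasFDerivAt_mul_comp_sq hρ.hasFDerivAt hV
  have hcoef_inner : V (ρ x) * (2 * ρ x * deriv V (ρ x) + V (ρ x)) *
      ⟪gradient ρ x, gradient φ x⟫ = 0 := by
    rwa [div2_smul hflux.differentiableAt hφ, hlap, mul_zero, zero_add, inner_gradient_left,
      hflux.fderiv, smul_apply, smul_eq_mul, ← inner_gradient_left] at hdiv
  exact (mul_eq_zero.mp hcoef_inner).resolve_left (mul_ne_zero hV0 hcoef)
end
end

section
/- Let U ⊆ ℝ² be open, let Z : ℝ² → ℝ² be twice continuously differentiable on U with Jacobian J(z) = DZ(z) invertible for every z ∈ U, and let f : ℝ² → ℝ² be differentiable on an open set containing Z(U). Define the transformed (Piola) field P : U → ℝ² by P(z) = det J(z) • (J(z))⁻¹ (f(Z(z))). Then for every z ∈ U, div P(z) = det J(z) · (div f)(Z(z)), where the divergence of a differentiable vector field at a point is the trace of its Fréchet derivative there. -/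
/-!
In dimension two, Cayley–Hamilton gives `det J • J⁻¹ = tr J • 1 - J`, so the Piola field is
`w ↦ tr (J w) • g w - J w (g w)` with `J = DZ` and `g = f ∘ Z`. Differentiating it, the two terms
carrying the second derivative `D²Z` have equal traces because `D²Z` is symmetric, and what is
left, `tr J · tr (M J) - tr (J M J)` with `M = Df (Z z)`, equals `det J · tr M` by
Cayley–Hamilton once more.
-/

noncomputable section

open Module Polynomial Topology

namespace LinearMap

variable {R M : Type*} [CommRing R] [Nontrivial R] [AddCommGroup M] [Module R M]
  [Module.Free R M] [Module.Finite R M]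

theorem mul_self_eq_trace_smul_sub_det_smul (h : finrank R M = 2) (f : M →ₗ[R] M) :
    f * f = trace R M f • f - LinearMap.det f • 1 := by
  have hcard : Fintype.card (Free.ChooseBasisIndex R M) = 2 := by
    rw [← finrank_eq_card_chooseBasisIndex, h]
  have hf := f.aeval_self_charpoly
  rw [charpoly_def, Matrix.charpoly_of_card_eq_two (M := toMatrix _ _ f) hcard,
    ← trace_eq_matrix_trace, det_toMatrix] at hf
  simp only [map_add, map_sub, map_mul, map_pow, aeval_C, aeval_X,
    Algebra.algebraMap_eq_smul_one, smul_mul_assoc, one_mul] at hf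
  rw [← sub_eq_zero, ← hf, sq]
  abel

theorem trace_mul_trace_mul_sub_trace_mul_mul (h : finrank R M = 2) (f g : M →ₗ[R] M) :
    trace R M f * trace R M (g * f) - trace R M (f * (g * f)) = LinearMap.det f * trace R M g := by
  rw [trace_mul_comm R g f, ← mul_assoc, ← trace_mul_comm R f (f * g), ← mul_assoc,
    mul_self_eq_trace_smul_sub_det_smul h, sub_mul, smul_mul_assoc, smul_mul_assoc, one_mul,
    map_sub, map_smul, map_smul, smul_eq_mul, smul_eq_mul]
  ring

end LinearMap

namespace ContinuousLinearMap

variable {𝕜 V : Type*} [RCLike 𝕜] [NormedAddCommGroup V] [NormedSpace 𝕜 V]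
  [FiniteDimensional 𝕜 V]

theorem isInvertible_of_bijective {L : V →L[𝕜] V} (hL : Function.Bijective L) :
    L.IsInvertible :=
  ⟨(LinearEquiv.ofBijective L.toLinearMap hL).toContinuousLinearEquiv, rfl⟩

theorem det_smul_inverse_apply (h : finrank 𝕜 V = 2) {L : V →L[𝕜] V}
    (hL : Function.Bijective L) (x : V) :
    LinearMap.det L.toLinearMap • L.inverse x = LinearMap.trace 𝕜 V L.toLinearMap • x - L x := by
  have hCH := congr($(LinearMap.mul_self_eq_trace_smul_sub_det_smul h L.toLinearMap) x)
  apply hL.injective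
  simp only [map_smul, map_sub, (isInvertible_of_bijective hL).self_apply_inverse]
  simp only [End.mul_apply, coe_coe, LinearMap.sub_apply, LinearMap.smul_apply,
    End.one_apply] at hCH
  rw [hCH]
  abel

variable (𝕜 V) in
def trace : (V →L[𝕜] V) →L[𝕜] 𝕜 :=
  LinearMap.toContinuousLinearMap (LinearMap.trace 𝕜 V ∘ₗ coeLM 𝕜)

@[simp]
theorem trace_apply (A : V →L[𝕜] V) : trace 𝕜 V A = LinearMap.trace 𝕜 V A := rfl

theorem trace_fderiv_trace_smul_sub_apply {J : V → V →L[𝕜] V} {J' : V →L[𝕜] V →L[𝕜] V}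
    {g : V → V} {g' : V →L[𝕜] V} {z : V} (hJ : HasFDerivAt J J' z) (hsymm : ∀ v w, J' v w = J' w v)
    (hg : HasFDerivAt g g' z) :
    LinearMap.trace 𝕜 V (fderiv 𝕜 (fun w => trace 𝕜 V (J w) • g w - J w (g w)) z) =
      LinearMap.trace 𝕜 V (J z) * LinearMap.trace 𝕜 V g' - LinearMap.trace 𝕜 V (J z ∘L g') := by
  have hQ : HasFDerivAt (fun w => trace 𝕜 V (J w) • g w - J w (g w)) _ z :=
    (((trace 𝕜 V).hasFDerivAt.comp z hJ).smul hg).sub (hJ.clm_apply hg)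
  rw [hQ.fderiv]
  have hflip : J'.flip (g z) = J' (g z) := by ext1 v; exact hsymm v (g z)
  simp [hflip]

end ContinuousLinearMap

open ContinuousLinearMap in
theorem trace_fderiv_det_smul_inverse_comp {𝕜 V : Type*} [RCLike 𝕜] [NormedAddCommGroup V]
    [NormedSpace 𝕜 V] [FiniteDimensional 𝕜 V] (h : finrank 𝕜 V = 2) {Z f : V → V} {z : V}
    (hZ : ContDiffAt 𝕜 2 Z z) (hJ : ∀ᶠ w in 𝓝 z, Function.Bijective (fderiv 𝕜 Z w))
    (hf : DifferentiableAt 𝕜 f (Z z)) :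
    LinearMap.trace 𝕜 V (fderiv 𝕜 (fun w =>
        LinearMap.det (fderiv 𝕜 Z w).toLinearMap • (fderiv 𝕜 Z w).inverse (f (Z w))) z) =
      LinearMap.det (fderiv 𝕜 Z z).toLinearMap * LinearMap.trace 𝕜 V (fderiv 𝕜 f (Z z)) := by
  have hP : (fun w => LinearMap.det (fderiv 𝕜 Z w).toLinearMap • (fderiv 𝕜 Z w).inverse (f (Z w)))
      =ᶠ[𝓝 z] fun w => trace 𝕜 V (fderiv 𝕜 Z w) • f (Z w) - fderiv 𝕜 Z w (f (Z w)) :=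
    hJ.mono fun w hw => det_smul_inverse_apply h hw _
  have hJ' : HasFDerivAt (fderiv 𝕜 Z) (fderiv 𝕜 (fderiv 𝕜 Z) z) z :=
    ((hZ.fderiv_right le_rfl).differentiableAt one_ne_zero).hasFDerivAt
  have hsymm : IsSymmSndFDerivAt 𝕜 Z z :=
    hZ.isSymmSndFDerivAt (by simp [minSmoothness_of_isRCLikeNormedField])
  have hg : HasFDerivAt (fun w => f (Z w)) (fderiv 𝕜 f (Z z) ∘L fderiv 𝕜 Z z) z :=
    hf.hasFDerivAt.comp z (hZ.differentiableAt two_ne_zero).hasFDerivAt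
  rw [hP.fderiv_eq, trace_fderiv_trace_smul_sub_apply hJ' hsymm hg]
  simp only [toLinearMap_comp, ← End.mul_eq_comp]
  exact LinearMap.trace_mul_trace_mul_sub_trace_mul_mul h _ _

/-- (Piola identity.) Let `Z : ℝ² → ℝ²` be `C²` on an open set `U`
with everywhere invertible Jacobian `J(z) = DZ(z)`, and let `f` be differentiable on
an open set `W ⊇ Z(U)`. Then the Piola transform
`P(z) = det J(z) • J(z)⁻¹ (f (Z z))` satisfies
`div P (z) = det J(z) · (div f) (Z z)` for all `z ∈ U`. -/
theorem piola_identity (U W : Set E2) (hU : IsOpen U) (hW : IsOpen W)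
    (Z f : E2 → E2) (hZ : ContDiffOn ℝ 2 Z U)
    (hJ : ∀ z ∈ U, Function.Bijective (fderiv ℝ Z z))
    (hZW : Z '' U ⊆ W) (hf : DifferentiableOn ℝ f W) :
    ∀ z ∈ U,
      div2 (fun w =>
          LinearMap.det (fderiv ℝ Z w).toLinearMap •
            (fderiv ℝ Z w).inverse (f (Z w))) z =
        LinearMap.det (fderiv ℝ Z z).toLinearMap * div2 f (Z z) := by
  intro z hz
  have hzU : U ∈ 𝓝 z := hU.mem_nhds hz
  exact trace_fderiv_det_smul_inverse_comp finrank_euclideanSpace_fin (hZ.contDiffAt hzU)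
    (Filter.eventually_of_mem hzU hJ) (hf.differentiableAt (hW.mem_nhds (hZW ⟨z, hz, rfl⟩)))
end
end
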